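/- arXiv:2006.07621 — 6 statements merged into one kernel-verified Lean document; each statement's English description precedes it below -/
import Mathlib

section
/- Let (E, g) be a semi-Riemannian Lie algebroid (g possibly degenerate with kernel subbundle K) admitting a Koszul derivative D. Then for every section U of K and all sections X, Y of E, the Lie derivative of g in the direction U vanishes: α(U)g(X,Y) − g([U,X],Y) − g(X,[U,Y]) = 0. -/
/-- An (algebraic model of a) Lie algebroid: `A` plays the role of `C^∞(M)`, `S` the
`A`-module of sections of `E`, with a Lie bracket on sections and an anchor valued in
derivations of `A` (vector fields on `M`), satisfying the Leibniz rule. -/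
structure AlgebroidData (A : Type*) [CommRing A] [Algebra ℝ A]
    (S : Type*) [AddCommGroup S] [Module A S] where
  bracket : S → S → S
  anchor : S → Derivation ℝ A A
  bracket_add_left : ∀ X Y Z : S, bracket (X + Y) Z = bracket X Z + bracket Y Z
  bracket_antisymm : ∀ X Y : S, bracket X Y = - bracket Y X
  jacobi : ∀ X Y Z : S,
    bracket (bracket X Y) Z = bracket X (bracket Y Z) - bracket Y (bracket X Z)
  leibniz : ∀ (f : A) (X Y : S), bracket X (f • Y) = f • bracket X Y + anchor X f • Y
  anchor_add : ∀ X Y : S, anchor (X + Y) = anchor X + anchor Y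

variable {A : Type*} [CommRing A] [Algebra ℝ A]
variable {S : Type*} [AddCommGroup S] [Module A S]


/-- Let `(E, g)` be a semi-Riemannian Lie algebroid (`g` possibly degenerate,
with kernel `K`) admitting a Koszul derivative `D` (axioms (a)–(d)).  Then for every
section `U` of `K` and all sections `X, Y`, the Lie derivative of `g` in the direction `U`
vanishes: `α(U)g(X,Y) − g([U,X],Y) − g(X,[U,Y]) = 0`. -/
theorem statement7 (Ed : AlgebroidData A S) (g : S → S → A)
    (hg_symm : ∀ X Y, g X Y = g Y X)
    (hg_add : ∀ X Y Z, g (X + Y) Z = g X Z + g Y Z)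
    (hg_smul : ∀ (f : A) (X Y : S), g (f • X) Y = f * g X Y)
    (D : S → S → S)
    -- (a) tensoriality in the first slot
    (ha : ∀ (f : A) (X Z W : S), g (D (f • X) Z) W = f * g (D X Z) W)
    -- (b) Leibniz rule in the second slot
    (hb : ∀ (f : A) (X Y W : S),
      g (D X (f • Y)) W = Ed.anchor X f * g Y W + f * g (D X Y) W)
    -- (c) metricity
    (hc : ∀ X Y Z : S, Ed.anchor Z (g X Y) = g (D Z X) Y + g X (D Z Y))
    -- (d) torsion-freeness
    (hd : ∀ X Y W : S, g (D X Y) W - g (D Y X) W = g (Ed.bracket X Y) W)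
    -- `U` is a section of the kernel `K` of `g`
    (U : S) (hU : ∀ W : S, g U W = 0) :
    ∀ X Y : S,
      Ed.anchor U (g X Y) - g (Ed.bracket U X) Y - g X (Ed.bracket U Y) = 0 := by
  intro X Y
  have key : ∀ Z W : S, g (D Z U) W = 0 := by
    intro Z W
    have h := hc U W Z
    rw [hU W, map_zero, hU (D Z W)] at h
    linear_combination -h
  have h1 : g (Ed.bracket U X) Y = g (D U X) Y := by
    have h := hd U X Y
    rw [key X Y] at h
    linear_combination -h
  have h2 : g X (Ed.bracket U Y) = g X (D U Y) := by
    have h := hd U Y X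
    rw [key Y X] at h
    rw [hg_symm X (Ed.bracket U Y), hg_symm X (D U Y)]
    linear_combination -h
  rw [hc X Y U, h1, h2]
  ring
end

section
/- Let (E, g) be a semi-Riemannian Lie algebroid with kernel subbundle K. If the Lie derivative of g vanishes in all directions of K (i.e. α(U)g(X,Y) = g([U,X],Y) + g(X,[U,Y]) for all U ∈ Sec(K)), then the Koszul formula 2g(D_X Y, Z) = α(X)g(Y,Z) + α(Y)g(Z,X) − α(Z)g(X,Y) + g([X,Y],Z) − g([Y,Z],X) − g([X,Z],Y) defines a Koszul derivative D for (E, g). -/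
variable {A : Type*} [CommRing A] [Algebra ℝ A]
variable {S : Type*} [AddCommGroup S] [Module A S]

/-- Cancel a factor of `2` in an `ℝ`-algebra. -/
lemma two_cancel {A : Type*} [CommRing A] [Algebra ℝ A] {a b : A}
    (h : (2 : A) * a = (2 : A) * b) : a = b := by
  have h2 : (2 : ℝ) • a = (2 : ℝ) • b := by
    rw [two_smul, two_smul, ← two_mul, ← two_mul, h]
  calc a = ((2 : ℝ)⁻¹ * 2) • a := by norm_num
    _ = (2 : ℝ)⁻¹ • ((2 : ℝ) • a) := by rw [mul_smul]
    _ = (2 : ℝ)⁻¹ • ((2 : ℝ) • b) := by rw [h2]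
    _ = ((2 : ℝ)⁻¹ * 2) • b := by rw [mul_smul]
    _ = b := by norm_num


/-- Let `(E, g)` be a semi-Riemannian Lie algebroid.  If the Lie derivative
of `g` vanishes in all directions of the kernel `K` of `g`, then the Koszul formula
`2g(D_X Y, Z) = α(X)g(Y,Z) + α(Y)g(Z,X) − α(Z)g(X,Y) + g([X,Y],Z) − g([Y,Z],X) − g([X,Z],Y)`
defines a Koszul derivative `D` for `(E, g)`: any operator `D` satisfying this formula
(such an operator is determined modulo sections of `K`) satisfies the four Koszul axioms. -/
theorem statement8 (Ed : AlgebroidData A S) (g : S → S → A)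
    (hg_symm : ∀ X Y, g X Y = g Y X)
    (hg_add : ∀ X Y Z, g (X + Y) Z = g X Z + g Y Z)
    (hg_smul : ∀ (f : A) (X Y : S), g (f • X) Y = f * g X Y)
    -- the Lie derivative of `g` vanishes in all directions of the kernel `K`:
    (hLie : ∀ U : S, (∀ W : S, g U W = 0) →
      ∀ X Y : S, Ed.anchor U (g X Y) = g (Ed.bracket U X) Y + g X (Ed.bracket U Y)) :
    ∀ D : S → S → S,
      -- if `D` satisfies the Koszul formula …
      (∀ X Y Z : S,
        (2 : A) * g (D X Y) Z =
          Ed.anchor X (g Y Z) + Ed.anchor Y (g Z X) - Ed.anchor Z (g X Y)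
          + g (Ed.bracket X Y) Z - g (Ed.bracket Y Z) X - g (Ed.bracket X Z) Y) →
      -- … then `D` is a Koszul derivative:
      -- (a) tensoriality in the first slot
      (∀ (f : A) (X Z W : S), g (D (f • X) Z) W = f * g (D X Z) W) ∧
      -- (b) Leibniz rule in the second slot
      (∀ (f : A) (X Y W : S),
        g (D X (f • Y)) W = Ed.anchor X f * g Y W + f * g (D X Y) W) ∧
      -- (c) metricity
      (∀ X Y Z : S, Ed.anchor Z (g X Y) = g (D Z X) Y + g X (D Z Y)) ∧
      -- (d) torsion-freeness
      (∀ X Y W : S, g (D X Y) W - g (D Y X) W = g (Ed.bracket X Y) W) := by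
  intro D hK
  -- g of a negated first argument
  have g_neg : ∀ X Y : S, g (-X) Y = - g X Y := by
    intro X Y
    rw [← neg_one_smul A X, hg_smul]; ring
  -- g of a subtracted first argument
  have g_sub : ∀ X Y Z : S, g (X - Y) Z = g X Z - g Y Z := by
    intro X Y Z
    rw [sub_eq_add_neg, hg_add, g_neg, sub_eq_add_neg]
  -- (d) torsion-freeness
  have hd : ∀ X Y W : S, g (D X Y) W - g (D Y X) W = g (Ed.bracket X Y) W := by
    intro X Y W
    apply two_cancel
    have h1 := hK X Y W
    have h2 := hK Y X W
    rw [hg_symm X W, hg_symm W Y, hg_symm Y X, Ed.bracket_antisymm Y X, g_neg] at h2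
    linear_combination h1 - h2
  -- (c) metricity
  have hc : ∀ X Y Z : S, Ed.anchor Z (g X Y) = g (D Z X) Y + g X (D Z Y) := by
    intro X Y Z
    apply two_cancel
    have h1 := hK Z X Y
    have h2 := hK Z Y X
    rw [hg_symm Y X, hg_symm X Z, hg_symm Z Y, Ed.bracket_antisymm Y X, g_neg] at h2
    rw [hg_symm X (D Z Y)]
    linear_combination -h1 - h2
  -- (b) Leibniz rule, derived from metricity
  have hb : ∀ (f : A) (X Y W : S),
      g (D X (f • Y)) W = Ed.anchor X f * g Y W + f * g (D X Y) W := by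
    intro f X Y W
    have h1 := hc (f • Y) W X
    have h2 := hc Y W X
    rw [hg_smul f Y W, hg_smul f Y (D X W)] at h1
    have hder : Ed.anchor X (f * g Y W) =
        f * Ed.anchor X (g Y W) + g Y W * Ed.anchor X f := by
      rw [Derivation.leibniz, smul_eq_mul, smul_eq_mul]
    linear_combination -h1 + hder + f * h2
  -- (a) tensoriality, derived from (b) and (d)
  have ha : ∀ (f : A) (X Z W : S), g (D (f • X) Z) W = f * g (D X Z) W := by
    intro f X Z W
    have t1 := hd (f • X) Z W
    have t2 := hb f Z X W
    have t3 := hd X Z W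
    have hbr : Ed.bracket (f • X) Z = f • Ed.bracket X Z - Ed.anchor Z f • X := by
      rw [Ed.bracket_antisymm (f • X) Z, Ed.leibniz, Ed.bracket_antisymm Z X]
      rw [smul_neg, neg_add, neg_neg, sub_eq_add_neg]
    have t4 : g (Ed.bracket (f • X) Z) W =
        f * g (Ed.bracket X Z) W - Ed.anchor Z f * g X W := by
      rw [hbr, g_sub, hg_smul, hg_smul]
    linear_combination t1 + t2 + t4 - f * t3
  exact ⟨ha, hb, hc, hd⟩
end

section
/- Let (E, g) be a semi-Riemannian Lie algebroid with kernel K such that dual torsion-free 'connections modulo K' exist, i.e. operators ∇, ∇* satisfying the duality α(X)g(Y,Z) = g(∇_X Y, Z) + g(Y, ∇*_X Z) and torsion-freeness g(∇_X Y − ∇_Y X, Z) = g([X,Y], Z) for all X,Y,Z. Then the space of sections of the kernel, Γ(K) = {U ∈ Sec(E) : g(U, ·) = 0}, is closed under the Lie algebroid bracket: [Γ(K), Γ(K)] ⊆ Γ(K). -/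
variable {A : Type*} [CommRing A] [Algebra ℝ A]
variable {S : Type*} [AddCommGroup S] [Module A S]


/-- Let `(E, g)` be a semi-Riemannian Lie algebroid with kernel `K` such that
dual torsion-free connections modulo `K` exist: operators `∇, ∇*` (valued in sections of
`E`, well defined modulo `K`, so all conditions are stated after pairing with `g`)
satisfying duality `α(X)g(Y,Z) = g(∇_X Y, Z) + g(Y, ∇*_X Z)` and torsion-freeness
`g(∇_X Y − ∇_Y X, Z) = g([X,Y], Z)`.  Then `Γ(K) = {U : g(U,·) = 0}` is closed under the
Lie algebroid bracket. -/
theorem statement10 (Ed : AlgebroidData A S) (g : S → S → A)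
    (hg_symm : ∀ X Y, g X Y = g Y X)
    (hg_add : ∀ X Y Z, g (X + Y) Z = g X Z + g Y Z)
    (hg_smul : ∀ (f : A) (X Y : S), g (f • X) Y = f * g X Y)
    (D Dstar : S → S → S)
    (hdual : ∀ X Y Z : S, Ed.anchor X (g Y Z) = g (D X Y) Z + g Y (Dstar X Z))
    (htf : ∀ X Y Z : S, g (D X Y - D Y X) Z = g (Ed.bracket X Y) Z) :
    ∀ U V : S, (∀ W : S, g U W = 0) → (∀ W : S, g V W = 0) →
      ∀ W : S, g (Ed.bracket U V) W = 0 := by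
  intro U V hU hV W
  have hneg : ∀ X Z : S, g (-X) Z = - g X Z := by
    intro X Z
    have := hg_smul (-1 : A) X Z
    simpa using this
  have hsub : g (D U V - D V U) W = g (D U V) W - g (D V U) W := by
    rw [sub_eq_add_neg, hg_add, hneg, sub_eq_add_neg]
  have h1 : g (D U V) W = 0 := by
    have := hdual U V W
    rw [hV W] at this
    have h0 : Ed.anchor U (0 : A) = 0 := by simp
    rw [h0, hV (Dstar U W)] at this
    simpa using this.symm
  have h2 : g (D V U) W = 0 := by
    have := hdual V U W
    rw [hU W] at this
    have h0 : Ed.anchor V (0 : A) = 0 := by simp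
    rw [h0, hU (Dstar V W)] at this
    simpa using this.symm
  rw [← htf, hsub, h1, h2, sub_zero]
end

section
/- For the contrast function F(φ,ψ) = 1 − |⟨φ,ψ⟩|²/(‖φ‖²‖ψ‖²) on a complex Hilbert space H, the induced symmetric form at a nonzero vector φ is g^F(φ)(x,y) = d²/dt ds|_{t=s=0} F(φ + t x + s y, φ) = (2 Re⟨x,y⟩‖φ‖² − 2 Re(⟨x,φ⟩⟨φ,y⟩))/‖φ‖⁴. In particular g^F(φ)(x,x) ≥ 0 with equality iff x is a complex multiple of φ. -/
open scoped InnerProductSpace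

/-- The contrast function `F(φ,ψ) = 1 − |⟨φ,ψ⟩|²/(‖φ‖²‖ψ‖²)` on a complex Hilbert space. -/
noncomputable def Fq {H : Type*} [NormedAddCommGroup H] [InnerProductSpace ℂ H]
    (φ ψ : H) : ℝ :=
  1 - ‖⟪φ, ψ⟫_ℂ‖ ^ 2 / (‖φ‖ ^ 2 * ‖ψ‖ ^ 2)

/-- The induced symmetric form at `φ ≠ 0`:
`g^F(φ)(x,y) = ∂²/∂t∂s|₀ F(φ + t x + s y, φ)` along real two-parameter families. -/
noncomputable def gFq {H : Type*} [NormedAddCommGroup H] [InnerProductSpace ℂ H]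
    (φ x y : H) : ℝ :=
  deriv (fun t : ℝ => deriv (fun s : ℝ => Fq (φ + t • x + s • y) φ) 0) 0

section Aux

variable {H : Type*} [NormedAddCommGroup H] [InnerProductSpace ℂ H]

lemma smul_inner_left' (r : ℝ) (z w : H) : ⟪r • z, w⟫_ℂ = (r:ℂ) * ⟪z, w⟫_ℂ := by
  rw [show r • z = ((r:ℂ)) • z by simp [algebraMap_smul]]
  rw [inner_smul_left]; simp

lemma smul_inner_right' (r : ℝ) (z w : H) : ⟪z, r • w⟫_ℂ = (r:ℂ) * ⟪z, w⟫_ℂ := by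
  rw [show r • w = ((r:ℂ)) • w by simp [algebraMap_smul]]
  rw [inner_smul_right]

lemma re_symm (z w : H) : (⟪z, w⟫_ℂ).re = (⟪w, z⟫_ℂ).re := by
  rw [← inner_conj_symm z w]; exact Complex.conj_re _

lemma re_self (z : H) : (⟪z, z⟫_ℂ).re = ‖z‖^2 := by
  simpa using inner_self_eq_norm_sq (𝕜 := ℂ) z

lemma im_self (z : H) : (⟪z, z⟫_ℂ).im = 0 := by
  rw [← RCLike.im_to_complex]
  exact inner_self_im z

lemma hnorm (φ x y : H) (t s : ℝ) :
    ‖φ + t • x + s • y‖^2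
      = ‖φ‖^2 + 2*t*(⟪x,φ⟫_ℂ).re + t^2*‖x‖^2
          + 2*s*((⟪y,φ⟫_ℂ).re + t*(⟪x,y⟫_ℂ).re) + s^2*‖y‖^2 := by
  have h := inner_self_eq_norm_sq (𝕜 := ℂ) (φ + t • x + s • y)
  rw [← h]
  simp only [inner_add_left, inner_add_right, smul_inner_left', smul_inner_right',
    Complex.add_re, Complex.mul_re, Complex.ofReal_re, Complex.ofReal_im,
    RCLike.re_to_complex]
  rw [re_symm φ x, re_symm φ y, re_symm y x, re_self, re_self, re_self]
  ring

lemma hinner (φ x y : H) (t s : ℝ) :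
    ⟪φ + t • x + s • y, φ⟫_ℂ = ⟪φ, φ⟫_ℂ + (t:ℂ) * ⟪x,φ⟫_ℂ + (s:ℂ) * ⟪y,φ⟫_ℂ := by
  rw [inner_add_left, inner_add_left, smul_inner_left', smul_inner_left']

lemma Fq_eval (φ x y : H) (t s : ℝ) :
    Fq (φ + t • x + s • y) φ
      = 1 - ((‖φ‖^2 + t * (⟪x,φ⟫_ℂ).re + s * (⟪y,φ⟫_ℂ).re)^2
              + (t * (⟪x,φ⟫_ℂ).im + s * (⟪y,φ⟫_ℂ).im)^2)
          / ((‖φ‖^2 + 2*t*(⟪x,φ⟫_ℂ).re + t^2*‖x‖^2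
              + 2*s*((⟪y,φ⟫_ℂ).re + t*(⟪x,y⟫_ℂ).re) + s^2*‖y‖^2) * ‖φ‖^2) := by
  have habs : ‖⟪φ + t • x + s • y, φ⟫_ℂ‖^2
      = (‖φ‖^2 + t * (⟪x,φ⟫_ℂ).re + s * (⟪y,φ⟫_ℂ).re)^2
          + (t * (⟪x,φ⟫_ℂ).im + s * (⟪y,φ⟫_ℂ).im)^2 := by
    rw [Complex.sq_norm, Complex.normSq_apply, hinner]
    simp only [Complex.add_re, Complex.add_im, Complex.mul_re, Complex.mul_im,
      Complex.ofReal_re, Complex.ofReal_im, re_self, im_self]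
    ring
  rw [Fq, habs, hnorm]

lemma hasDerivAt_affine (c d : ℝ) (t : ℝ) : HasDerivAt (fun u : ℝ => c + u * d) d t := by
  simpa using (hasDerivAt_mul_const d (x := t)).const_add c

/-- inner derivative: generic rational function of s. -/
lemma hasDerivAt_quot (a₁ b₁ a₂ b₂ d₀ e f k : ℝ) (hd : d₀ * k ≠ 0) :
    HasDerivAt (fun s : ℝ => 1 - ((a₁ + s*b₁)^2 + (a₂ + s*b₂)^2) / ((d₀ + 2*s*e + s^2*f) * k))
      (-(( (2*(a₁)*b₁ + 2*(a₂)*b₂) * (d₀*k) - ((a₁)^2 + (a₂)^2) * (2*e*k) ) / (d₀*k)^2)) 0 := by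
  have h1 : HasDerivAt (fun s : ℝ => (a₁ + s*b₁)^2 + (a₂ + s*b₂)^2)
      (2*a₁*b₁ + 2*a₂*b₂) 0 := by
    have := ((hasDerivAt_affine a₁ b₁ 0).pow 2).add ((hasDerivAt_affine a₂ b₂ 0).pow 2)
    refine this.congr_deriv ?_
    push_cast
    ring
  have h2 : HasDerivAt (fun s : ℝ => (d₀ + 2*s*e + s^2*f) * k) (2*e*k) 0 := by
    have ha : HasDerivAt (fun s : ℝ => 2*s*e) (2*e) 0 := by
      simpa using ((hasDerivAt_id (0:ℝ)).const_mul 2).mul_const e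
    have hb : HasDerivAt (fun s : ℝ => s^2*f) 0 0 := by
      simpa using (hasDerivAt_pow 2 (0:ℝ)).mul_const f
    have := (((ha.const_add d₀).add hb).mul_const k)
    refine this.congr_deriv ?_
    ring
  have hd' : (fun s : ℝ => (d₀ + 2*s*e + s^2*f) * k) 0 ≠ 0 := by simpa using hd
  have := (h1.div h2 hd').const_sub 1
  refine this.congr_deriv ?_
  norm_num

/-- outer derivative. -/
lemma hasDerivAt_outer (p Ar Ai Br Bi cxy nx : ℝ) (hp : p ≠ 0) :
    HasDerivAt (fun t : ℝ =>
        -(( (2*(p + t*Ar)*Br + 2*(t*Ai)*Bi) * ((p + 2*t*Ar + t^2*nx)*p)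
          - ((p + t*Ar)^2 + (t*Ai)^2) * (2*(Br + t*cxy)*p) )
        / ((p + 2*t*Ar + t^2*nx)*p)^2))
      ((2*cxy*p - 2*(Ar*Br + Ai*Bi))/p^2) 0 := by
  have hA : HasDerivAt (fun t : ℝ => p + t*Ar) Ar 0 := hasDerivAt_affine p Ar 0
  have hn1 : HasDerivAt (fun t : ℝ => 2*(p + t*Ar)*Br + 2*(t*Ai)*Bi)
      (2*Ar*Br + 2*Ai*Bi) 0 := by
    have h₁ := (hA.const_mul 2).mul_const Br
    have h₂ := ((hasDerivAt_mul_const Ai (x := (0:ℝ))).const_mul 2).mul_const Bi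
    exact h₁.add h₂
  have hd1 : HasDerivAt (fun t : ℝ => (p + 2*t*Ar + t^2*nx)*p) (2*Ar*p) 0 := by
    have ha : HasDerivAt (fun t : ℝ => 2*t*Ar) (2*Ar) 0 := by
      simpa using ((hasDerivAt_id (0:ℝ)).const_mul 2).mul_const Ar
    have hb : HasDerivAt (fun t : ℝ => t^2*nx) 0 0 := by
      simpa using (hasDerivAt_pow 2 (0:ℝ)).mul_const nx
    have := (((ha.const_add p).add hb).mul_const p)
    refine this.congr_deriv ?_
    ring
  have hn2 : HasDerivAt (fun t : ℝ => (p + t*Ar)^2 + (t*Ai)^2) (2*p*Ar) 0 := by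
    have := (hA.pow 2).add ((hasDerivAt_mul_const Ai (x := (0:ℝ))).pow 2)
    refine this.congr_deriv ?_
    push_cast
    ring
  have he1 : HasDerivAt (fun t : ℝ => 2*(Br + t*cxy)*p) (2*cxy*p) 0 :=
    ((hasDerivAt_affine Br cxy 0).const_mul 2).mul_const p
  have hDen : HasDerivAt (fun t : ℝ => ((p + 2*t*Ar + t^2*nx)*p)^2)
      (2*((p + 2*0*Ar + 0^2*nx)*p)^1*(2*Ar*p)) 0 := hd1.pow 2
  have hDen0 : (fun t : ℝ => ((p + 2*t*Ar + t^2*nx)*p)^2) 0 ≠ 0 := by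
    show ((p + 2*(0:ℝ)*Ar + (0:ℝ)^2*nx)*p)^2 ≠ 0
    have h0 : (p + 2*(0:ℝ)*Ar + (0:ℝ)^2*nx)*p = p*p := by norm_num
    rw [h0]
    positivity
  have hNum : HasDerivAt (fun t : ℝ =>
      (2*(p + t*Ar)*Br + 2*(t*Ai)*Bi) * ((p + 2*t*Ar + t^2*nx)*p)
        - ((p + t*Ar)^2 + (t*Ai)^2) * (2*(Br + t*cxy)*p))
      ((2*Ar*Br + 2*Ai*Bi) * ((p + 2*0*Ar + 0^2*nx)*p)
        + (2*(p + 0*Ar)*Br + 2*(0*Ai)*Bi) * (2*Ar*p)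
        - ((2*p*Ar) * (2*(Br + 0*cxy)*p)
          + ((p + 0*Ar)^2 + (0*Ai)^2) * (2*cxy*p))) 0 :=
    (hn1.mul hd1).sub (hn2.mul he1)
  have := (hNum.div hDen hDen0).neg
  refine this.congr_deriv ?_
  simp only [mul_zero, zero_mul, add_zero, pow_one, mul_one, zero_pow, zero_add, ne_eq,
    OfNat.ofNat_ne_zero, not_false_eq_true]
  field_simp
  ring

end Aux

lemma gFq_eq {H : Type*} [NormedAddCommGroup H] [InnerProductSpace ℂ H]
    (φ : H) (hφ : φ ≠ 0) (x y : H) :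
    gFq φ x y
      = (2 * (⟪x, y⟫_ℂ).re * ‖φ‖ ^ 2 - 2 * (⟪x, φ⟫_ℂ * ⟪φ, y⟫_ℂ).re) / ‖φ‖ ^ 4 := by
  set p := ‖φ‖^2 with hp_def
  set Ar := (⟪x,φ⟫_ℂ).re
  set Ai := (⟪x,φ⟫_ℂ).im
  set Br := (⟪y,φ⟫_ℂ).re
  set Bi := (⟪y,φ⟫_ℂ).im
  set cxy := (⟪x,y⟫_ℂ).re
  set nx := ‖x‖^2
  set ny := ‖y‖^2
  have hp0 : (0:ℝ) < p := by
    rw [hp_def]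
    exact pow_pos (norm_pos_iff.mpr hφ) 2
  have hp : p ≠ 0 := hp0.ne'
  have hG : (fun t : ℝ => deriv (fun s : ℝ => Fq (φ + t • x + s • y) φ) 0)
      =ᶠ[nhds 0] (fun t : ℝ =>
        -(( (2*(p + t*Ar)*Br + 2*(t*Ai)*Bi) * ((p + 2*t*Ar + t^2*nx)*p)
          - ((p + t*Ar)^2 + (t*Ai)^2) * (2*(Br + t*cxy)*p) )
        / ((p + 2*t*Ar + t^2*nx)*p)^2)) := by
    have hcont : ContinuousAt (fun t : ℝ => φ + t • x) 0 := by fun_prop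
    have h0 : (fun t : ℝ => φ + t • x) 0 ≠ 0 := by simpa using hφ
    filter_upwards [hcont.eventually_ne h0] with t ht
    have hw : (0:ℝ) < p + 2*t*Ar + t^2*nx := by
      have h1 : ‖φ + t • x + (0:ℝ) • y‖^2 = p + 2*t*Ar + t^2*nx := by
        rw [hnorm]; ring
      have h2 : φ + t • x + (0:ℝ) • y = φ + t • x := by simp
      rw [h2] at h1
      rw [← h1]
      exact pow_pos (norm_pos_iff.mpr ht) 2
    have hd : (p + 2*t*Ar + t^2*nx) * p ≠ 0 := mul_ne_zero hw.ne' hp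
    have hfun : (fun s : ℝ => Fq (φ + t • x + s • y) φ)
        = (fun s : ℝ => 1 - ((p + t*Ar + s*Br)^2 + (t*Ai + s*Bi)^2)
            / ((p + 2*t*Ar + t^2*nx + 2*s*(Br + t*cxy) + s^2*ny) * p)) := by
      funext s
      rw [Fq_eval]
    rw [hfun]
    have := hasDerivAt_quot (p + t*Ar) Br (t*Ai) Bi (p + 2*t*Ar + t^2*nx)
      (Br + t*cxy) ny p hd
    have heq : (fun s : ℝ => 1 - ((p + t*Ar + s*Br)^2 + (t*Ai + s*Bi)^2)
            / ((p + 2*t*Ar + t^2*nx + 2*s*(Br + t*cxy) + s^2*ny) * p))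
        = (fun s : ℝ => 1 - (((p + t*Ar) + s*Br)^2 + ((t*Ai) + s*Bi)^2)
            / (((p + 2*t*Ar + t^2*nx) + 2*s*(Br + t*cxy) + s^2*ny) * p)) := by
      funext s; ring_nf
    rw [heq]
    rw [this.deriv]
  rw [gFq, hG.deriv_eq, (hasDerivAt_outer p Ar Ai Br Bi cxy nx hp).deriv]
  have hre : (⟪x, φ⟫_ℂ * ⟪φ, y⟫_ℂ).re = Ar*Br + Ai*Bi := by
    rw [← inner_conj_symm φ y]
    simp only [Complex.mul_re, Complex.conj_re, Complex.conj_im]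
    ring
  rw [hre]
  have h4 : ‖φ‖^4 = p^2 := by rw [hp_def]; ring
  rw [h4]

/-- For the contrast function `F(φ,ψ) = 1 − |⟨φ,ψ⟩|²/(‖φ‖²‖ψ‖²)` the induced
symmetric form at `φ ≠ 0` is
`g^F(φ)(x,y) = (2 Re⟨x,y⟩‖φ‖² − 2 Re(⟨x,φ⟩⟨φ,y⟩))/‖φ‖⁴`, and `g^F(φ)(x,x) ≥ 0` with
equality iff `x` is a complex multiple of `φ` (the Cauchy–Schwarz equality case). -/
theorem statement16 {H : Type*} [NormedAddCommGroup H] [InnerProductSpace ℂ H]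
    [CompleteSpace H]
    (φ : H) (hφ : φ ≠ 0) :
    (∀ x y : H,
      gFq φ x y
        = (2 * (⟪x, y⟫_ℂ).re * ‖φ‖ ^ 2 - 2 * (⟪x, φ⟫_ℂ * ⟪φ, y⟫_ℂ).re) / ‖φ‖ ^ 4) ∧
    (∀ x : H, 0 ≤ gFq φ x x) ∧
    (∀ x : H, gFq φ x x = 0 ↔ ∃ c : ℂ, x = c • φ) := by
  have hmain := gFq_eq φ hφ
  have hxx : ∀ x : H, gFq φ x x = (2*‖x‖^2*‖φ‖^2 - 2*‖⟪x,φ⟫_ℂ‖^2)/‖φ‖^4 := by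
    intro x
    rw [hmain x x, re_self]
    congr 2
    rw [← inner_conj_symm φ x, Complex.mul_conj]
    simp only [Complex.normSq_eq_norm_sq]
    rw [Complex.ofReal_re]
  have hCS : ∀ x : H, ‖⟪x,φ⟫_ℂ‖^2 ≤ ‖x‖^2*‖φ‖^2 := by
    intro x
    have := norm_inner_le_norm (𝕜 := ℂ) x φ
    nlinarith [norm_nonneg (⟪x,φ⟫_ℂ), norm_nonneg x, norm_nonneg φ]
  have hφ4 : (0:ℝ) < ‖φ‖^4 := by
    have : (0:ℝ) < ‖φ‖ := norm_pos_iff.mpr hφ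
    positivity
  refine ⟨hmain, ?_, ?_⟩
  · intro x
    rw [hxx x]
    have := hCS x
    apply div_nonneg _ hφ4.le
    nlinarith
  · intro x
    rw [hxx x]
    constructor
    · intro h
      have hnum : 2*‖x‖^2*‖φ‖^2 - 2*‖⟪x,φ⟫_ℂ‖^2 = 0 := by
        rcases (div_eq_zero_iff.mp h) with h' | h'
        · exact h'
        · exact absurd h' hφ4.ne'
      by_cases hx : x = 0
      · exact ⟨0, by simp [hx]⟩
      · have heq : ‖⟪x,φ⟫_ℂ‖ = ‖x‖*‖φ‖ := by
          have h1 : ‖⟪x,φ⟫_ℂ‖^2 = (‖x‖*‖φ‖)^2 := by nlinarith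
          exact (pow_left_inj₀ (norm_nonneg _)
            (mul_nonneg (norm_nonneg x) (norm_nonneg φ)) two_ne_zero).mp h1
        obtain ⟨r, hr, hrx⟩ := (norm_inner_eq_norm_iff (𝕜 := ℂ) hx hφ).mp heq
        exact ⟨r⁻¹, by rw [hrx, smul_smul, inv_mul_cancel₀ hr, one_smul]⟩
    · rintro ⟨c, rfl⟩
      by_cases hc : c = 0
      · simp [hc]
      · have hx : c • φ ≠ 0 := smul_ne_zero hc hφ
        have heq : ‖⟪c • φ, φ⟫_ℂ‖ = ‖c • φ‖*‖φ‖ :=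
          (norm_inner_eq_norm_iff (𝕜 := ℂ) hx hφ).mpr ⟨c⁻¹, inv_ne_zero hc,
            by rw [smul_smul, inv_mul_cancel₀ hc, one_smul]⟩
        rw [div_eq_zero_iff]
        left
        rw [heq]
        ring
end

section
/- Let G ⇉ M be a Lie groupoid and F: G → ℝ a contrast function (F|_M = 0 and dF|_M = 0). Then F* = F ∘ inv is also a contrast function, and the induced symmetric forms agree: g^F = g^{F*}, where g^F(X,Y) = X^L Y^L F |_M for left-invariant extensions X^L, Y^L. -/
/-- An algebraic model of the differential calculus on a Lie groupoid `G ⇉ M`: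
`AG` plays the role of `C^∞(G)`, `AM` of `C^∞(M)`, `S` of the sections of the Lie
algebroid `E = Lie(G)`.  `res` is restriction of functions to `M ⊆ G`, `inv` is the
pullback by groupoid inversion (which fixes `M` pointwise), `L X` and `R X` are the left-
and right-invariant vector fields (derivations of `C^∞(G)`) representing a section `X`,
and `anchor X` is the anchor vector field on `M`.  The fields record the key computational
facts: inversion is an involution fixing `M`, it intertwines `X^L` with `−X^R`,
`[X^R, Y^L] = 0`, and `(X^L − X^R)|_M` represents `α(X)`. -/
structure GroupoidCalculus (AG AM S : Type*) [CommRing AG] [Algebra ℝ AG]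
    [CommRing AM] [Algebra ℝ AM] [AddCommGroup S] where
  res : AG →ₐ[ℝ] AM
  inv : AG →ₐ[ℝ] AG
  L : S → Derivation ℝ AG AG
  R : S → Derivation ℝ AG AG
  anchor : S → Derivation ℝ AM AM
  inv_inv : ∀ f : AG, inv (inv f) = f
  res_inv : ∀ f : AG, res (inv f) = res f
  inv_L : ∀ (X : S) (f : AG), inv (L X f) = - R X (inv f)
  LR_comm : ∀ (X Y : S) (f : AG), L X (R Y f) = R Y (L X f)
  anchor_res : ∀ (X : S) (f : AG), res (L X f) - res (R X f) = anchor X (res f)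

variable {AG AM S : Type*} [CommRing AG] [Algebra ℝ AG]
  [CommRing AM] [Algebra ℝ AM] [AddCommGroup S]

/-- `F : G → ℝ` is a contrast function: `F|_M = 0` and `dF|_M = 0` (every vector field
applied to `F` vanishes on `M`). -/
def IsContrast (G : GroupoidCalculus AG AM S) (F : AG) : Prop :=
  G.res F = 0 ∧ ∀ D : Derivation ℝ AG AG, G.res (D F) = 0

/-- Conjugation of a derivation by the involution `inv`. -/
def GroupoidCalculus.conj (G : GroupoidCalculus AG AM S) (D : Derivation ℝ AG AG) :
    Derivation ℝ AG AG where
  toLinearMap :=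
    { toFun := fun f => G.inv (D (G.inv f))
      map_add' := by intro f g; simp
      map_smul' := by intro c f; simp }
  map_one_eq_zero' := by simp
  leibniz' := by
    intro f g
    simp only [LinearMap.coe_mk, AddHom.coe_mk, map_mul, Derivation.leibniz, map_add,
      smul_eq_mul, G.inv_inv]

lemma GroupoidCalculus.inv_R (G : GroupoidCalculus AG AM S) (X : S) (f : AG) :
    G.inv (G.R X f) = - G.L X (G.inv f) := by
  have h := G.inv_L X (G.inv f)
  rw [G.inv_inv] at h
  have h3 : G.inv (-(G.R X f)) = G.L X (G.inv f) := by rw [← h, G.inv_inv]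
  rw [map_neg] at h3
  rw [← h3, neg_neg]

/-- Let `G ⇉ M` be a Lie groupoid and `F : G → ℝ` a contrast function
(`F|_M = 0`, `dF|_M = 0`).  Then `F* = F ∘ inv` is also a contrast function and the
induced symmetric forms agree: `g^F = g^{F*}`, where `g^F(X,Y) = X^L Y^L F|_M`.  (For a
contrast function the second-order part along `M` is well defined, i.e.
`X^L Y^L F|_M = X^R Y^R F|_M`, recorded as hypothesis `hwd`.) -/
theorem statement17 (G : GroupoidCalculus AG AM S)
    (hwd : ∀ F : AG, IsContrast G F →
      ∀ X Y : S, G.res (G.L X (G.L Y F)) = G.res (G.R X (G.R Y F)))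
    (F : AG) (hF : IsContrast G F) :
    IsContrast G (G.inv F) ∧
    ∀ X Y : S, G.res (G.L X (G.L Y (G.inv F))) = G.res (G.L X (G.L Y F)) := by
  obtain ⟨h0, h1⟩ := hF
  have hc : IsContrast G (G.inv F) := by
    constructor
    · rw [G.res_inv]; exact h0
    · intro D
      have hh := h1 (G.conj D)
      have hE : (G.conj D) F = G.inv (D (G.inv F)) := rfl
      rwa [hE, G.res_inv] at hh
  refine ⟨hc, fun X Y => ?_⟩
  have key : G.L X (G.L Y (G.inv F)) = G.inv (G.R X (G.R Y F)) := by
    have h2' : ∀ g : AG, G.L X (G.inv g) = - G.inv (G.R X g) := fun g => by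
      rw [G.inv_R, neg_neg]
    have h1' : G.L Y (G.inv F) = - G.inv (G.R Y F) := by
      rw [G.inv_R, neg_neg]
    rw [h1', map_neg, h2', neg_neg]
  rw [key, G.res_inv]
  exact (hwd F ⟨h0, h1⟩ X Y).symm
end

section
/- Let F be a Koszul contrast function on a Lie groupoid G ⇉ M with g^F of constant rank and kernel K, and let ∇^{[F]}, ∇^{[F*]} be the induced dual connections on L = E/K. Then the three-tensor T^{[F]}(X̄,Ȳ,Z̄) := g^{[F]}(∇^{[F]}_X Ȳ − ∇^{[F*]}_X Ȳ, Z̄) = X^L Y^L Z^R (F − F*)|_M is totally symmetric in X, Y, Z and vanishes whenever any of X, Y, Z lies in Sec(K); hence it defines a totally symmetric element of ⊙³ L*. -/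
variable {AG AM S : Type*} [CommRing AG] [Algebra ℝ AG]
  [CommRing AM] [Algebra ℝ AM] [AddCommGroup S]

/-- Let `F` be a Koszul contrast function on a Lie groupoid `G ⇉ M` with
`g^F` of constant rank and kernel `K`.  Then the three-tensor
`T^{[F]}(X,Y,Z) = X^L Y^L Z^R (F − F*)|_M` (which equals
`g^{[F]}(∇^{[F]}_X Ȳ − ∇^{[F*]}_X Ȳ, Z̄)` by the defining formulas of the induced dual
connections) is totally symmetric in `X, Y, Z` and vanishes whenever any of its arguments
lies in `Sec(K)`; hence it defines a totally symmetric element of `⊙³ L*`, `L = E/K`.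
The hypothesis `hjet2` records that `F − F*` has vanishing second jet along `M`. -/
theorem statement19 (G : GroupoidCalculus AG AM S)
    (F : AG) (hF : IsContrast G F)
    -- `K` is the (constant-rank) kernel of `g^F`
    (K : S → Prop)
    (hK : ∀ Z : S, K Z ↔ ∀ Y : S, G.res (G.L Y (G.L Z F)) = 0)
    -- the Koszul condition
    (hKoszul : ∀ X Y Z : S, K Z →
      G.res (G.L X (G.L Y (G.R Z F))) = 0 ∧ G.res (G.R X (G.R Y (G.L Z F))) = 0)
    -- `F − F*` has vanishing second jet along `M`
    (hjet2 : ∀ D D' : Derivation ℝ AG AG, G.res (D (D' (F - G.inv F))) = 0) :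
    -- `T(X,Y,Z) := X^L Y^L Z^R (F − F*)|_M` is totally symmetric …
    (∀ X Y Z : S,
      G.res (G.L X (G.L Y (G.R Z (F - G.inv F))))
        = G.res (G.L Y (G.L X (G.R Z (F - G.inv F))))) ∧
    (∀ X Y Z : S,
      G.res (G.L X (G.L Y (G.R Z (F - G.inv F))))
        = G.res (G.L X (G.L Z (G.R Y (F - G.inv F))))) ∧
    -- … and vanishes whenever one of `X, Y, Z` is a section of `K`
    (∀ X Y Z : S, (K X ∨ K Y ∨ K Z) →
      G.res (G.L X (G.L Y (G.R Z (F - G.inv F)))) = 0) := by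

  set h := F - G.inv F with hh
  -- inversion intertwines R with -L
  have inv_R : ∀ (X : S) (f : AG), G.inv (G.R X f) = - G.L X (G.inv f) := by
    intro X f
    have h1 := G.inv_L X (G.inv f)
    rw [G.inv_inv] at h1
    have h2 := congrArg G.inv h1
    rw [G.inv_inv, map_neg] at h2
    rw [h2, neg_neg]
  -- under `res`, the three derivations applied to h commute
  have swap12 : ∀ D1 D2 D3 : Derivation ℝ AG AG,
      G.res (D1 (D2 (D3 h))) = G.res (D2 (D1 (D3 h))) := by
    intro D1 D2 D3
    have := hjet2 ⁅D1, D2⁆ D3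
    rw [Derivation.commutator_apply, map_sub, sub_eq_zero] at this
    exact this
  have swap23 : ∀ D1 D2 D3 : Derivation ℝ AG AG,
      G.res (D1 (D2 (D3 h))) = G.res (D1 (D3 (D2 h))) := by
    intro D1 D2 D3
    have := hjet2 D1 ⁅D2, D3⁆
    rw [Derivation.commutator_apply, map_sub, map_sub, sub_eq_zero] at this
    exact this
  -- under `res`, outermost L may be replaced by R
  have LtoR : ∀ (X : S) (D D' : Derivation ℝ AG AG),
      G.res (G.L X (D (D' h))) = G.res (G.R X (D (D' h))) := by
    intro X D D'
    have h1 := G.anchor_res X (D (D' h))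
    rw [hjet2 D D', map_zero, sub_eq_zero] at h1
    exact h1
  -- canonical form: everything equals the all-L expression
  have canon : ∀ X Y Z : S,
      G.res (G.L X (G.L Y (G.R Z h))) = G.res (G.L X (G.L Y (G.L Z h))) := by
    intro X Y Z
    calc G.res (G.L X (G.L Y (G.R Z h)))
        = G.res (G.L X (G.R Z (G.L Y h))) := swap23 _ _ _
      _ = G.res (G.R Z (G.L X (G.L Y h))) := swap12 _ _ _
      _ = G.res (G.L Z (G.L X (G.L Y h))) := (LtoR Z (G.L X) (G.L Y)).symm
      _ = G.res (G.L X (G.L Z (G.L Y h))) := swap12 _ _ _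
      _ = G.res (G.L X (G.L Y (G.L Z h))) := swap23 _ _ _
  have sym1 : ∀ X Y Z : S,
      G.res (G.L X (G.L Y (G.R Z h))) = G.res (G.L Y (G.L X (G.R Z h))) := by
    intro X Y Z
    rw [canon, canon, swap12]
  have sym2 : ∀ X Y Z : S,
      G.res (G.L X (G.L Y (G.R Z h))) = G.res (G.L X (G.L Z (G.R Y h))) := by
    intro X Y Z
    rw [canon, canon, swap23]
  -- vanishing when the third argument is in K
  have vanZ : ∀ X Y Z : S, K Z → G.res (G.L X (G.L Y (G.R Z h))) = 0 := by
    intro X Y Z hZ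
    obtain ⟨k1, k2⟩ := hKoszul X Y Z hZ
    have key : G.inv (G.L X (G.L Y (G.R Z (G.inv F)))) = - G.R X (G.R Y (G.L Z F)) := by
      rw [G.inv_L, G.inv_L, inv_R, G.inv_inv]
      simp [map_neg]
    have e2 : G.res (G.L X (G.L Y (G.R Z (G.inv F)))) = - G.res (G.R X (G.R Y (G.L Z F))) := by
      rw [← G.res_inv, key, map_neg]
    have expand : G.res (G.L X (G.L Y (G.R Z h)))
        = G.res (G.L X (G.L Y (G.R Z F))) - G.res (G.L X (G.L Y (G.R Z (G.inv F)))) := by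
      rw [hh, map_sub, map_sub, map_sub, map_sub]
    rw [expand, e2, k1, k2]
    ring
  refine ⟨sym1, sym2, ?_⟩
  intro X Y Z hXYZ
  rcases hXYZ with hX | hY | hZ
  · rw [sym1, sym2]; exact vanZ Y Z X hX
  · rw [sym2]; exact vanZ X Z Y hY
  · exact vanZ X Y Z hZ
end
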